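/- arXiv:2212.14708 — 2 statements merged into one kernel-verified Lean document; each statement's English description precedes it below -/
import Mathlib

section
/- Let R = {W_w, V_{w,v}, Λ_w, α_{w,v}} be a continuous relay fusion frame on (H,K) with bounds A and B and (invertible) frame operator S_R. Then the canonical dual system R̊ = {S_R^{-1}W_w, V_{w,v}, Λ_w π_{W_w} S_R^{-1}, α_{w,v}} is a continuous relay fusion frame: for all f ∈ H, (1/B)‖f‖² ≤ ∫_Ω∫_{Ω'} α_{w,v}² ‖P_{V_{w,v}} Λ_w π_{W_w} S_R^{-1} π_{S_R^{-1}W_w} f‖² dν(v)dμ(w) ≤ ‖S_R^{-1}‖² B ‖f‖². -/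
open MeasureTheory

/-- The orthogonal projection of `E` onto a subspace, as a map `E →L[ℂ] E`. -/
noncomputable def oproj {E : Type*} [NormedAddCommGroup E] [InnerProductSpace ℂ E]
    (U : Submodule ℂ E) [U.HasOrthogonalProjection] : E →L[ℂ] E :=
  U.subtypeL.comp U.orthogonalProjectionOnto

/-- the canonical dual system `{S_R⁻¹W_w, V_{w,v}, Λ_w π_{W_w} S_R⁻¹, α_{w,v}}` of
a continuous relay fusion frame with bounds `A, B` and frame operator `S_R` is a continuous
relay fusion frame with bounds `1/B` and `‖S_R⁻¹‖²B`. -/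
theorem stmt10
    {H K : Type*}
    [NormedAddCommGroup H] [InnerProductSpace ℂ H] [CompleteSpace H]
    [NormedAddCommGroup K] [InnerProductSpace ℂ K] [CompleteSpace K]
    {Ω Ω' : Type*} [MeasurableSpace Ω] [MeasurableSpace Ω']
    (μ : Measure Ω) (ν : Measure Ω')
    (W : Ω → Submodule ℂ H) [∀ w, Submodule.HasOrthogonalProjection (W w)]
    (V : Ω → Ω' → Submodule ℂ K) [∀ w v, Submodule.HasOrthogonalProjection (V w v)]
    (α : Ω → Ω' → ℝ) (Λ : Ω → H →L[ℂ] K)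
    (hα : ∀ w v, 0 < α w v)
    (hmeas : ∀ f : H, AEStronglyMeasurable
      (fun p : Ω × Ω' => α p.1 p.2 • oproj (V p.1 p.2) (Λ p.1 (oproj (W p.1) f))) (μ.prod ν))
    (A B : ℝ) (hA : 0 < A) (hAB : A ≤ B)
    (hInt : ∀ f : H, Integrable
      (fun p : Ω × Ω' => (α p.1 p.2) ^ 2 * ‖oproj (V p.1 p.2) (Λ p.1 (oproj (W p.1) f))‖ ^ 2)
      (μ.prod ν))
    (hframe : ∀ f : H,
      A * ‖f‖ ^ 2 ≤ ∫ w, ∫ v, (α w v) ^ 2 * ‖oproj (V w v) (Λ w (oproj (W w) f))‖ ^ 2 ∂ν ∂μ ∧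
      ∫ w, ∫ v, (α w v) ^ 2 * ‖oproj (V w v) (Λ w (oproj (W w) f))‖ ^ 2 ∂ν ∂μ ≤ B * ‖f‖ ^ 2)
    -- the frame operator `S` and its inverse `Sinv`
    (S Sinv : H →L[ℂ] H)
    (hS : ∀ f g : H, (inner ℂ (S f) g : ℂ) =
      ∫ w, ∫ v, ((α w v : ℂ)) ^ 2 *
        (inner ℂ (oproj (V w v) (Λ w (oproj (W w) f)))
          (oproj (V w v) (Λ w (oproj (W w) g))) : ℂ) ∂ν ∂μ)
    (hSinv : S.comp Sinv = ContinuousLinearMap.id ℂ H ∧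
      Sinv.comp S = ContinuousLinearMap.id ℂ H)
    -- the subspaces `S_R⁻¹ W_w`
    (W' : Ω → Submodule ℂ H) [∀ w, Submodule.HasOrthogonalProjection (W' w)]
    (hW' : ∀ w, W' w = (W w).map (Sinv : H →ₗ[ℂ] H)) :
    ∀ f : H,
      (1 / B) * ‖f‖ ^ 2
        ≤ ∫ w, ∫ v, (α w v) ^ 2 *
            ‖oproj (V w v) (Λ w (oproj (W w) (Sinv (oproj (W' w) f))))‖ ^ 2 ∂ν ∂μ ∧
      ∫ w, ∫ v, (α w v) ^ 2 *
          ‖oproj (V w v) (Λ w (oproj (W w) (Sinv (oproj (W' w) f))))‖ ^ 2 ∂ν ∂μ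
        ≤ ‖Sinv‖ ^ 2 * B * ‖f‖ ^ 2 := by
  have hB : (0:ℝ) < B := lt_of_lt_of_le hA hAB
  have hSid : ∀ x : H, S (Sinv x) = x := fun x => by
    have := ContinuousLinearMap.ext_iff.mp hSinv.1 x
    simpa using this
  -- S is self-adjoint
  have hSA : ∀ f g : H, (inner ℂ (S f) g : ℂ) = inner ℂ f (S g) := by
    intro f g
    rw [← inner_conj_symm f (S g), hS g f, hS f g, ← integral_conj]
    refine integral_congr_ae (Filter.Eventually.of_forall fun w => ?_)
    dsimp only
    rw [← integral_conj]
    refine integral_congr_ae (Filter.Eventually.of_forall fun v => ?_)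
    dsimp only
    simp [map_mul, map_pow, Complex.conj_ofReal, inner_conj_symm]
  -- Sinv is self-adjoint
  have hSinvSA : ∀ f g : H, (inner ℂ (Sinv f) g : ℂ) = inner ℂ f (Sinv g) := by
    intro f g
    calc (inner ℂ (Sinv f) g : ℂ) = inner ℂ (Sinv f) (S (Sinv g)) := by rw [hSid]
    _ = inner ℂ (S (Sinv f)) (Sinv g) := (hSA _ _).symm
    _ = inner ℂ f (Sinv g) := by rw [hSid]
  -- key projection identity
  have hproj : ∀ (w : Ω) (f : H),
      oproj (W w) (Sinv (oproj (W' w) f)) = oproj (W w) (Sinv f) := by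
    intro w f
    have hmem : f - oproj (W' w) f ∈ (W' w)ᗮ := Submodule.sub_starProjection_mem_orthogonal f
    have h2 : Sinv (f - oproj (W' w) f) ∈ (W w)ᗮ := by
      rw [Submodule.mem_orthogonal]
      intro u hu
      have huW' : Sinv u ∈ W' w := by rw [hW']; exact ⟨u, hu, rfl⟩
      have h0 := (Submodule.mem_orthogonal _ _).mp hmem (Sinv u) huW'
      rw [← hSinvSA]
      exact h0
    have h3 : oproj (W w) (Sinv (f - oproj (W' w) f)) = 0 := by
      have h2' := Submodule.orthogonalProjectionOnto_apply_of_mem_orthogonal h2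
      simp only [oproj, ContinuousLinearMap.coe_comp', Function.comp_apply,
        Submodule.subtypeL_apply] at h2' ⊢
      rw [h2', ZeroMemClass.coe_zero]
    have h4 : oproj (W w) (Sinv f) - oproj (W w) (Sinv (oproj (W' w) f)) = 0 := by
      rw [← map_sub (oproj (W w)), ← map_sub Sinv]
      exact h3
    exact (sub_eq_zero.mp h4).symm
  -- key identity : the frame integral equals ⟨Sf, f⟩
  have hkey : ∀ f : H, (inner ℂ (S f) f : ℂ) =
      ((∫ w, ∫ v, (α w v) ^ 2 * ‖oproj (V w v) (Λ w (oproj (W w) f))‖ ^ 2 ∂ν ∂μ : ℝ) : ℂ) := by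
    intro f
    rw [hS f f]
    calc (∫ w, ∫ v, ((α w v : ℂ)) ^ 2 *
        (inner ℂ (oproj (V w v) (Λ w (oproj (W w) f)))
          (oproj (V w v) (Λ w (oproj (W w) f))) : ℂ) ∂ν ∂μ)
        = ∫ w, ((∫ v, (α w v) ^ 2 * ‖oproj (V w v) (Λ w (oproj (W w) f))‖ ^ 2 ∂ν : ℝ) : ℂ) ∂μ := by
          refine integral_congr_ae (Filter.Eventually.of_forall fun w => ?_)
          dsimp only
          calc (∫ v, ((α w v : ℂ)) ^ 2 *
              (inner ℂ (oproj (V w v) (Λ w (oproj (W w) f)))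
                (oproj (V w v) (Λ w (oproj (W w) f))) : ℂ) ∂ν)
              = ∫ v, (((α w v) ^ 2 * ‖oproj (V w v) (Λ w (oproj (W w) f))‖ ^ 2 : ℝ) : ℂ) ∂ν := by
                refine integral_congr_ae (Filter.Eventually.of_forall fun v => ?_)
                dsimp only
                rw [inner_self_eq_norm_sq_to_K]
                norm_cast
                rw [Complex.ofReal_mul]
                exact rfl
          _ = _ := integral_ofReal
    _ = _ := integral_ofReal
  intro f
  simp only [hproj]
  set Ig : ℝ := ∫ w, ∫ v, (α w v) ^ 2 * ‖oproj (V w v) (Λ w (oproj (W w) (Sinv f)))‖ ^ 2 ∂ν ∂μ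
    with hIg
  set If : ℝ := ∫ w, ∫ v, (α w v) ^ 2 * ‖oproj (V w v) (Λ w (oproj (W w) f))‖ ^ 2 ∂ν ∂μ
    with hIf
  have hInonneg : ∀ u : H, (0:ℝ) ≤
      ∫ w, ∫ v, (α w v) ^ 2 * ‖oproj (V w v) (Λ w (oproj (W w) u))‖ ^ 2 ∂ν ∂μ := fun u =>
    le_trans (by positivity) (hframe u).1
  constructor
  · -- lower bound
    have hfg : (inner ℂ (S (Sinv f)) f : ℂ) = ((‖f‖ ^ 2 : ℝ) : ℂ) := by
      rw [hSid f, inner_self_eq_norm_sq_to_K]; norm_cast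
    have hgf : (inner ℂ (S f) (Sinv f) : ℂ) = ((‖f‖ ^ 2 : ℝ) : ℂ) := by
      rw [hSA, hSid f, inner_self_eq_norm_sq_to_K]; norm_cast
    -- quadratic expansion
    have hexp : ∀ t : ℝ,
        (∫ w, ∫ v, (α w v) ^ 2 *
            ‖oproj (V w v) (Λ w (oproj (W w) (Sinv f - (t:ℂ) • f)))‖ ^ 2 ∂ν ∂μ)
          = Ig - 2 * t * ‖f‖ ^ 2 + t ^ 2 * If := by
      intro t
      rw [hIg, hIf]
      have hc : (inner ℂ (S (Sinv f - (t:ℂ) • f)) (Sinv f - (t:ℂ) • f) : ℂ)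
          = inner ℂ (S (Sinv f)) (Sinv f) - (t:ℂ) * inner ℂ (S (Sinv f)) f
            - (t:ℂ) * inner ℂ (S f) (Sinv f) + (t:ℂ) ^ 2 * inner ℂ (S f) f := by
        rw [map_sub, S.map_smul]
        simp only [inner_sub_left, inner_sub_right, inner_smul_left, inner_smul_right,
          Complex.conj_ofReal]
        ring
      rw [hkey (Sinv f - (t:ℂ) • f), hkey (Sinv f), hkey f, hfg, hgf] at hc
      have hr : (∫ w, ∫ v, (α w v) ^ 2 *
            ‖oproj (V w v) (Λ w (oproj (W w) (Sinv f - (t:ℂ) • f)))‖ ^ 2 ∂ν ∂μ)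
          = (∫ w, ∫ v, (α w v) ^ 2 * ‖oproj (V w v) (Λ w (oproj (W w) (Sinv f)))‖ ^ 2 ∂ν ∂μ)
            - t * ‖f‖ ^ 2 - t * ‖f‖ ^ 2
            + t ^ 2 * ∫ w, ∫ v, (α w v) ^ 2 * ‖oproj (V w v) (Λ w (oproj (W w) f))‖ ^ 2 ∂ν ∂μ := by
        exact_mod_cast hc
      linarith [hr]
    have hq : ∀ t : ℝ, 0 ≤ If * (t * t) + (-(2 * ‖f‖ ^ 2)) * t + Ig := by
      intro t
      have h1 := hInonneg (Sinv f - (t:ℂ) • f)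
      rw [hexp t] at h1
      nlinarith [h1]
    have hd := discrim_le_zero hq
    rw [discrim] at hd
    have hcs : (‖f‖ ^ 2) ^ 2 ≤ If * Ig := by nlinarith [hd]
    by_cases hf : f = 0
    · calc (1 / B) * ‖f‖ ^ 2 = 0 := by rw [hf]; simp
      _ ≤ Ig := by rw [hIg]; exact hInonneg (Sinv f)
    · have hfn : (0:ℝ) < ‖f‖ ^ 2 := pow_pos (norm_pos_iff.mpr hf) 2
      have hIfle : If ≤ B * ‖f‖ ^ 2 := (hframe f).2
      have hIgnn : 0 ≤ Ig := hInonneg (Sinv f)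
      have h5 : If * Ig ≤ B * ‖f‖ ^ 2 * Ig :=
        mul_le_mul_of_nonneg_right hIfle hIgnn
      rw [one_div, inv_mul_le_iff₀ hB]
      nlinarith [hcs, h5, hfn]
  · -- upper bound
    have h1 : Ig ≤ B * ‖Sinv f‖ ^ 2 := (hframe (Sinv f)).2
    have h2 : ‖Sinv f‖ ≤ ‖Sinv‖ * ‖f‖ := Sinv.le_opNorm f
    nlinarith [norm_nonneg (Sinv f), norm_nonneg f, norm_nonneg Sinv, h1,
      mul_le_mul_of_nonneg_left (pow_le_pow_left₀ (norm_nonneg (Sinv f)) h2 2) hB.le]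
end

section
/- Let R = {W_w, V_{w,v}, Λ_w, α_{w,v}} be a continuous relay fusion frame on (H,K) with frame operator S_R, a positive invertible operator, and let S_R^{-1/2} denote the inverse of its positive square root. Then {S_R^{-1/2}W_w, V_{w,v}, Λ_w π_{W_w} S_R^{-1/2}, α_{w,v}} is a Parseval continuous relay fusion frame: for all f ∈ H, ∫_Ω∫_{Ω'} α_{w,v}² ‖P_{V_{w,v}} Λ_w π_{W_w} S_R^{-1/2} π_{S_R^{-1/2}W_w} f‖² dν(v)dμ(w) = ‖f‖². -/
open MeasureTheory

/-- `{S_R^{-1/2}W_w, V_{w,v}, Λ_w π_{W_w} S_R^{-1/2}, α_{w,v}}` is a Parseval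
continuous relay fusion frame, where `S_R^{1/2}` is the positive square root of the frame
operator of a continuous relay fusion frame. -/
theorem stmt13
    {H K : Type*}
    [NormedAddCommGroup H] [InnerProductSpace ℂ H] [CompleteSpace H]
    [NormedAddCommGroup K] [InnerProductSpace ℂ K] [CompleteSpace K]
    {Ω Ω' : Type*} [MeasurableSpace Ω] [MeasurableSpace Ω']
    (μ : Measure Ω) (ν : Measure Ω')
    (W : Ω → Submodule ℂ H) [∀ w, (W w).HasOrthogonalProjection]
    (V : Ω → Ω' → Submodule ℂ K) [∀ w v, (V w v).HasOrthogonalProjection]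
    (α : Ω → Ω' → ℝ) (Λ : Ω → H →L[ℂ] K)
    (hα : ∀ w v, 0 < α w v)
    (hmeas : ∀ f : H, AEStronglyMeasurable
      (fun p : Ω × Ω' => α p.1 p.2 • oproj (V p.1 p.2) (Λ p.1 (oproj (W p.1) f))) (μ.prod ν))
    (A B : ℝ) (hA : 0 < A) (hAB : A ≤ B)
    (hInt : ∀ f : H, Integrable
      (fun p : Ω × Ω' => (α p.1 p.2) ^ 2 * ‖oproj (V p.1 p.2) (Λ p.1 (oproj (W p.1) f))‖ ^ 2)
      (μ.prod ν))
    (hframe : ∀ f : H,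
      A * ‖f‖ ^ 2 ≤ ∫ w, ∫ v, (α w v) ^ 2 * ‖oproj (V w v) (Λ w (oproj (W w) f))‖ ^ 2 ∂ν ∂μ ∧
      ∫ w, ∫ v, (α w v) ^ 2 * ‖oproj (V w v) (Λ w (oproj (W w) f))‖ ^ 2 ∂ν ∂μ ≤ B * ‖f‖ ^ 2)
    -- the frame operator `S`
    (S : H →L[ℂ] H)
    (hS : ∀ f g : H, (inner ℂ (S f) g : ℂ) =
      ∫ w, ∫ v, ((α w v : ℂ)) ^ 2 *
        (inner ℂ (oproj (V w v) (Λ w (oproj (W w) f)))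
          (oproj (V w v) (Λ w (oproj (W w) g))) : ℂ) ∂ν ∂μ)
    -- `T = S^{1/2}`: the positive square root of `S`, with inverse `Tinv = S^{-1/2}`
    (T Tinv : H →L[ℂ] H)
    (hTpos : T.IsPositive)
    (hTsq : T.comp T = S)
    (hTinv : T.comp Tinv = ContinuousLinearMap.id ℂ H ∧
      Tinv.comp T = ContinuousLinearMap.id ℂ H)
    -- the subspaces `S^{-1/2} W_w`
    (W' : Ω → Submodule ℂ H) [∀ w, (W' w).HasOrthogonalProjection]
    (hW' : ∀ w, W' w = (W w).map (Tinv : H →ₗ[ℂ] H)) :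
    ∀ f : H,
      ∫ w, ∫ v, (α w v) ^ 2 *
          ‖oproj (V w v) (Λ w (oproj (W w) (Tinv (oproj (W' w) f))))‖ ^ 2 ∂ν ∂μ
        = ‖f‖ ^ 2 := by
  classical
  have hTsa : ContinuousLinearMap.adjoint T = T :=
    ContinuousLinearMap.isSelfAdjoint_iff'.mp hTpos.isSelfAdjoint
  have hTinvsa : ContinuousLinearMap.adjoint Tinv = Tinv := by
    have h1 : (ContinuousLinearMap.adjoint Tinv).comp T = ContinuousLinearMap.id ℂ H := by
      conv_lhs => rw [← hTsa]
      rw [← ContinuousLinearMap.adjoint_comp, hTinv.1, ContinuousLinearMap.adjoint_id]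
    calc ContinuousLinearMap.adjoint Tinv
        = (ContinuousLinearMap.adjoint Tinv).comp (T.comp Tinv) := by
          rw [hTinv.1, ContinuousLinearMap.comp_id]
      _ = ((ContinuousLinearMap.adjoint Tinv).comp T).comp Tinv := by
          rw [ContinuousLinearMap.comp_assoc]
      _ = Tinv := by rw [h1, ContinuousLinearMap.id_comp]
  intro f
  set g := Tinv f with hg
  have h1 : T (Tinv f) = f := congrFun (congrArg DFunLike.coe hTinv.1) f
  -- key projection identity
  have hproj : ∀ w, oproj (W w) (Tinv (oproj (W' w) f)) = oproj (W w) g := by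
    intro w
    have hsub : f - oproj (W' w) f ∈ (W' w)ᗮ :=
      Submodule.sub_starProjection_mem_orthogonal (K := W' w) f
    have hmem : Tinv (f - oproj (W' w) f) ∈ (W w)ᗮ := by
      rw [Submodule.mem_orthogonal]
      intro x hx
      have hx' : Tinv x ∈ W' w := by
        rw [hW' w]; exact ⟨x, hx, rfl⟩
      calc (inner ℂ x (Tinv (f - oproj (W' w) f)) : ℂ)
          = inner ℂ ((ContinuousLinearMap.adjoint Tinv) x) (f - oproj (W' w) f) := by
            rw [ContinuousLinearMap.adjoint_inner_left]
        _ = inner ℂ (Tinv x) (f - oproj (W' w) f) := by rw [hTinvsa]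
        _ = 0 := (Submodule.mem_orthogonal (W' w) (f - oproj (W' w) f)).mp hsub
              (Tinv x) hx'
    have hzero : oproj (W w) (Tinv (f - oproj (W' w) f)) = 0 := by
      show ((W w).subtypeL ((W w).orthogonalProjectionOnto (Tinv (f - oproj (W' w) f))) : H) = 0
      rw [Submodule.orthogonalProjectionOnto_apply_of_mem_orthogonal hmem]
      simp
    have h3 : oproj (W w) (Tinv f) - oproj (W w) (Tinv (oproj (W' w) f)) = 0 := by
      rw [← map_sub (oproj (W w)), ← map_sub Tinv]
      exact hzero
    exact (sub_eq_zero.mp h3).symm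
  simp only [hproj]
  -- now compute the integral for g
  have hSgf : S g = T f := by
    rw [← hTsq]
    simp only [ContinuousLinearMap.comp_apply, hg, h1]
  have hinner : (inner ℂ (S g) g : ℂ) = ((‖f‖ ^ 2 : ℝ) : ℂ) := by
    rw [hSgf, hg, ← ContinuousLinearMap.adjoint_inner_right T, hTsa, h1,
      inner_self_eq_norm_sq_to_K]
    norm_cast
  have hpt : ∀ w v, ((α w v : ℂ)) ^ 2 *
      (inner ℂ (oproj (V w v) (Λ w (oproj (W w) g)))
        (oproj (V w v) (Λ w (oproj (W w) g))) : ℂ)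
      = (((α w v) ^ 2 * ‖oproj (V w v) (Λ w (oproj (W w) g))‖ ^ 2 : ℝ) : ℂ) := by
    intro w v
    rw [inner_self_eq_norm_sq_to_K]
    push_cast [Complex.ofReal_pow]
    rfl
  have hcast : (inner ℂ (S g) g : ℂ) = ((∫ w, ∫ v, (α w v) ^ 2 *
      ‖oproj (V w v) (Λ w (oproj (W w) g))‖ ^ 2 ∂ν ∂μ : ℝ) : ℂ) := by
    rw [hS g g]
    calc (∫ w, ∫ v, ((α w v : ℂ)) ^ 2 *
          (inner ℂ (oproj (V w v) (Λ w (oproj (W w) g)))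
            (oproj (V w v) (Λ w (oproj (W w) g))) : ℂ) ∂ν ∂μ)
        = ∫ w, ((∫ v, (α w v) ^ 2 *
            ‖oproj (V w v) (Λ w (oproj (W w) g))‖ ^ 2 ∂ν : ℝ) : ℂ) ∂μ := by
          refine integral_congr_ae (Filter.Eventually.of_forall fun w => ?_)
          simp only [hpt]
          exact integral_ofReal
      _ = _ := integral_ofReal
  have := hcast.symm.trans hinner
  exact_mod_cast this
end
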